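/- Let M ⊂ ℂ^N×ℂ^N be a formal generic manifold of codimension d whose ideal, in coordinates Z = (z,w) ∈ ℂ^n×ℂ^d and ζ = (χ,τ), is generated by w_j − Q_j(z,χ,τ), j = 1,…,d, and let γ be the Segre variety mapping γ(ζ,t) = (t, Q(t,χ,τ)). Then for any integer j ≥ 2, the iterated Segre mappings satisfy v^{j+1}(t^1,…,t^{j−1},t^j,t^{j+1})|_{t^{j+1} = t^{j−1}} = v^{j−1}(t^1,…,t^{j−1}). -/

import Mathlib

/-!
`cmp` is substitution of power series without constant term; identified with Mathlib's
`MvPowerSeries.subst`, it is associative and commutes with coefficientwise conjugation.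
The `w`-part of `v^{j+1}` is `Q(t^{j+1}, v̄^j)` and `v̄^j = (t^j, Q̄(t^j, v^{j-1}))`. After
`t^{j+1} = t^{j-1}` this becomes `Q(z, χ, Q̄(χ, z, w))` with `z = t^{j-1}`, `χ = t^j` and
`(z, w) = v^{j-1}`, which the reality identity `Q(z, χ, Q̄(χ, z, w)) = w` collapses to `w`.
-/

noncomputable section

namespace Segre

open MvPowerSeries

/-- Formal power series with complex coefficients. -/
abbrev PS (σ : Type*) := MvPowerSeries σ ℂ

/-- Build a power series from its coefficient function. -/
def ofFun {σ : Type*} (g : (σ →₀ ℕ) → ℂ) : PS σ := g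

/-- Coefficientwise complex conjugation of a formal power series. -/
def conjPS {σ : Type*} (f : PS σ) : PS σ := MvPowerSeries.map (σ := σ) (starRingEnd ℂ) f

/-- Formal partial derivative of a formal power series. -/
def pd {σ : Type*} [DecidableEq σ] (j : σ) (f : PS σ) : PS σ :=
  ofFun fun m => ((m j : ℂ) + 1) * MvPowerSeries.coeff (R := ℂ) (m + Finsupp.single j 1) f

/-- Reindexing of variables along an equivalence. -/
def reindexPS {σ τ : Type*} (e : σ ≃ τ) (f : PS σ) : PS τ :=
  ofFun fun m => MvPowerSeries.coeff (R := ℂ) (Finsupp.equivMapDomain e.symm m) f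

/-- Formal composition (substitution) `f ∘ F` of a formal power series
`f` in the variables `τ` with a family `F` of power series without constant
term.  (For families with nonvanishing constant term the value is junk.) -/
def cmp {τ σ : Type*} [Fintype τ] [DecidableEq τ] (f : PS τ) (F : τ → PS σ) : PS σ :=
  ofFun fun m => MvPowerSeries.coeff (R := ℂ) m
    (∑ α ∈ Finset.Iic (Finsupp.equivFunOnFinite.symm fun _ => m.sum fun _ k => k),
      MvPowerSeries.coeff (R := ℂ) α f • ∏ i, F i ^ α i)

/-- Renaming of variables along an (injective) map. -/
def injPS {σ τ : Type*} [Fintype σ] [DecidableEq σ] (ι : σ → τ) (f : PS σ) : PS τ :=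
  cmp f fun s => MvPowerSeries.X (ι s)

/-- The "generic rank" of a matrix over a commutative ring: the largest size of a
nonvanishing minor. -/
def matGenRank {α β R : Type*} [Fintype α] [Fintype β] [CommRing R] (M : Matrix α β R) : ℕ :=
  sSup {s | ∃ (r : Fin s ↪ α) (c : Fin s ↪ β), (M.submatrix r c).det ≠ 0}

/-- The Jacobian matrix of a formal mapping. -/
def jac {σ ι : Type*} [DecidableEq σ] (F : ι → PS σ) : Matrix ι σ (PS σ) :=
  Matrix.of fun i j => pd j (F i)

/-- The rank `Rk F` of a formal mapping: the largest size of a nonvanishing minor of the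
Jacobian matrix, i.e. the rank of the Jacobian matrix over the fraction field. -/
def rk {σ ι : Type*} [Fintype σ] [DecidableEq σ] [Fintype ι] (F : ι → PS σ) : ℕ :=
  matGenRank (jac F)

/-- The rank at `0` of the Jacobian matrix of a formal mapping. -/
def rk0 {σ ι : Type*} [Fintype σ] [DecidableEq σ] [Fintype ι] (F : ι → PS σ) : ℕ :=
  Matrix.rank ((jac F).map (MvPowerSeries.constantCoeff (σ := σ) (R := ℂ)))

/-- A formal mapping: each component has vanishing constant term. -/
def IsFormalMap {σ ι : Type*} (F : ι → PS σ) : Prop :=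
  ∀ i, MvPowerSeries.constantCoeff (σ := σ) (R := ℂ) (F i) = 0

/-- The differential at `0` of a formal power series. -/
def diff0 {σ : Type*} [DecidableEq σ] (f : PS σ) : σ → ℂ :=
  fun j => MvPowerSeries.constantCoeff (σ := σ) (R := ℂ) (pd j f)

/-- `I` is the manifold ideal with generators `f`: the generators have no constant
term, generate `I`, and have linearly independent differentials at `0`. -/
def IsMfldIdealWith {σ ι : Type*} [Fintype σ] [DecidableEq σ]
    (I : Ideal (PS σ)) (f : ι → PS σ) : Prop :=
  (∀ i, MvPowerSeries.constantCoeff (σ := σ) (R := ℂ) (f i) = 0) ∧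
  I = Ideal.span (Set.range f) ∧
  LinearIndependent ℂ fun i => diff0 (f i)

/-- `I` is a manifold ideal of codimension `d`. -/
def IsMfldIdeal {σ : Type*} [Fintype σ] [DecidableEq σ] (I : Ideal (PS σ)) (d : ℕ) : Prop :=
  ∃ f : Fin d → PS σ, IsMfldIdealWith I f

/-- A formal vector field, given by its coefficients. -/
abbrev VF (σ : Type*) := σ → PS σ

/-- The action of a formal vector field (as a derivation) on a power series. -/
def vfApply {σ : Type*} [Fintype σ] [DecidableEq σ] (X : VF σ) (f : PS σ) : PS σ :=
  ∑ j, X j * pd j f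

/-- The Lie bracket (commutator) of two formal vector fields. -/
def vfBracket {σ : Type*} [Fintype σ] [DecidableEq σ] (X Y : VF σ) : VF σ :=
  fun j => vfApply X (Y j) - vfApply Y (X j)

/-- Evaluation of a formal vector field at the origin. -/
def vfEval0 {σ : Type*} (X : VF σ) : σ → ℂ :=
  fun j => MvPowerSeries.constantCoeff (σ := σ) (R := ℂ) (X j)

/-- A formal vector field is tangent to (the formal manifold defined by) an ideal if it
maps the ideal into itself. -/
def Tangent {σ : Type*} [Fintype σ] [DecidableEq σ] (X : VF σ) (I : Ideal (PS σ)) : Prop :=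
  ∀ f ∈ I, vfApply X f ∈ I

/-- The Lie algebra (of formal vector fields) generated by a set `S`. -/
inductive lieGen {σ : Type*} [Fintype σ] [DecidableEq σ] (S : Set (VF σ)) : VF σ → Prop
  | base {X} : X ∈ S → lieGen S X
  | add {X Y} : lieGen S X → lieGen S Y → lieGen S (X + Y)
  | smul (c : ℂ) {X} : lieGen S X → lieGen S (fun j => (MvPowerSeries.C (σ := σ) (R := ℂ) c) * X j)
  | bracket {X Y} : lieGen S X → lieGen S Y → lieGen S (vfBracket X Y)

/-- A set of formal vector fields which is a Lie algebra and a `ℂ[[x]]`-module. -/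
structure IsLieMod {σ : Type*} [Fintype σ] [DecidableEq σ] (g : Set (VF σ)) : Prop where
  add_mem : ∀ {X Y : VF σ}, X ∈ g → Y ∈ g → X + Y ∈ g
  smul_mem : ∀ (a : PS σ) {X : VF σ}, X ∈ g → (fun j => a * X j) ∈ g
  bracket_mem : ∀ {X Y : VF σ}, X ∈ g → Y ∈ g → vfBracket X Y ∈ g

/-- The involution `σ(f)(Z,ζ) = conj f(ζ,Z)` on power series in `(Z,ζ)`. -/
def realOp {σZ : Type*} (f : PS (σZ ⊕ σZ)) : PS (σZ ⊕ σZ) :=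
  conjPS (reindexPS (Equiv.sumComm σZ σZ) f)

/-- The matrix `∂ρ/∂Z` of the derivatives of `ρ` in the first (holomorphic) block of
variables. -/
def zJac {σZ ι : Type*} [DecidableEq σZ] (ρ : ι → PS (σZ ⊕ σZ)) : Matrix ι σZ (PS (σZ ⊕ σZ)) :=
  Matrix.of fun l j => pd (Sum.inl j) (ρ l)

/-- `I` is the ideal of a formal generic manifold of codimension `d`, with given
generators `ρ`: `I` is a real manifold ideal and `∂ρ/∂Z(0)` has rank `d`. -/
def IsGenericMfld {σZ : Type*} [Fintype σZ] [DecidableEq σZ] {d : ℕ}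
    (I : Ideal (PS (σZ ⊕ σZ))) (ρ : Fin d → PS (σZ ⊕ σZ)) : Prop :=
  IsMfldIdealWith I ρ ∧ (∀ f ∈ I, realOp f ∈ I) ∧
  Matrix.rank ((zJac ρ).map (MvPowerSeries.constantCoeff (R := ℂ))) = d

/-- The set of formal `(1,0)` and `(0,1)` vector fields tangent to (the manifold defined
by) `I`. -/
def holFields {σZ : Type*} [Fintype σZ] [DecidableEq σZ] (I : Ideal (PS (σZ ⊕ σZ))) :
    Set (VF (σZ ⊕ σZ)) :=
  {X | ((∀ j, X (Sum.inr j) = 0) ∨ (∀ j, X (Sum.inl j) = 0)) ∧ Tangent X I}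

/-- `dim_ℂ g_M(0)`, where `g_M` is the Lie algebra generated by the formal `(1,0)` and
`(0,1)` vector fields tangent to `M`. -/
def gMDim {σZ : Type*} [Fintype σZ] [DecidableEq σZ] (I : Ideal (PS (σZ ⊕ σZ))) : ℕ :=
  Module.finrank ℂ (Submodule.span ℂ (vfEval0 '' {X | lieGen (holFields I) X}))

/-- `γ(ζ,t)` is a Segre variety mapping for the (formal generic manifold with) defining
series `ρ`:  `γ` has no constant term, `ρ(γ(ζ,t),ζ) = 0`, and `∂γ/∂t(0)` has rank `n`. -/
def IsSegreMap {n d : ℕ} (ρ : Fin d → PS (Fin (n + d) ⊕ Fin (n + d)))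
    (γ : Fin (n + d) → PS (Fin (n + d) ⊕ Fin n)) : Prop :=
  IsFormalMap γ ∧
  (∀ l, cmp (ρ l) (Sum.elim γ fun j => MvPowerSeries.X (Sum.inl j)) = 0) ∧
  Matrix.rank
    (Matrix.of fun (i : Fin (n + d)) (j : Fin n) =>
      MvPowerSeries.constantCoeff (R := ℂ) (pd (Sum.inr j) (γ i))) = n

/-- The iterated Segre mappings: `iterSegre γ j` is `v^{j+1}`, a formal mapping from
`ℂ^{(j+1)n}` (with variables indexed by `Fin (j+1) × Fin n`) to `ℂ^N`. -/
def iterSegre {n d : ℕ} (γ : Fin (n + d) → PS (Fin (n + d) ⊕ Fin n)) :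
    (j : ℕ) → Fin (n + d) → PS (Fin (j + 1) × Fin n)
  | 0 => fun c =>
      cmp (γ c) (Sum.elim (fun _ => 0) fun i => MvPowerSeries.X ((0 : Fin 1), i))
  | m + 1 => fun c =>
      cmp (γ c)
        (Sum.elim
          (fun z => conjPS (injPS (fun p : Fin (m + 1) × Fin n => (p.1.castSucc, p.2))
            (iterSegre γ m z)))
          (fun i => MvPowerSeries.X (Fin.last (m + 1), i)))


/-- The iterated Segre mappings associated with the graphed defining equations
`w = Q(z,χ,τ)` and the Segre variety mapping `γ(ζ,t) = (t, Q(t,χ,τ))`: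
`segQ Q j` is `v^{j+1}`. -/
def segQ {n d : ℕ} (Q : Fin d → PS (Fin n ⊕ (Fin n ⊕ Fin d))) :
    (j : ℕ) → Fin n ⊕ Fin d → PS (Fin (j + 1) × Fin n)
  | 0 => Sum.elim (fun i => MvPowerSeries.X ((0 : Fin 1), i))
      (fun l => cmp (Q l)
        (Sum.elim (fun i => (MvPowerSeries.X ((0 : Fin 1), i) : PS (Fin 1 × Fin n)))
          fun _ => 0))
  | m + 1 => Sum.elim (fun i => MvPowerSeries.X (Fin.last (m + 1), i))
      (fun l => cmp (Q l)
        (Sum.elim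
          (fun i => (MvPowerSeries.X (Fin.last (m + 1), i) : PS (Fin (m + 2) × Fin n)))
          fun zc => conjPS (injPS (fun p : Fin (m + 1) × Fin n => (p.1.castSucc, p.2))
            (segQ Q m zc))))

lemma coeff_prod_pow_eq_zero_of_degree_lt {σ τ : Type*} [Fintype τ] {F : τ → PS σ}
    (hF : IsFormalMap F) {α : τ →₀ ℕ} {m : σ →₀ ℕ} {i : τ} (h : m.degree < α i) :
    coeff m (∏ i, F i ^ α i) = 0 := by
  refine coeff_of_lt_order (lt_of_lt_of_le ?_ (le_order_prod _ _))
  calc (m.degree : ℕ∞) < α i := by exact_mod_cast h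
    _ ≤ (F i ^ α i).order := le_order_pow_of_constantCoeff_eq_zero _ (hF i)
    _ ≤ ∑ i, (F i ^ α i).order :=
      Finset.single_le_sum (f := fun i => (F i ^ α i).order) (fun _ _ => zero_le)
        (Finset.mem_univ i)

section Substitution

variable {σ τ υ : Type*}

lemma IsFormalMap.elim {α β : Type*} {F : α → PS σ} {G : β → PS σ} (hF : IsFormalMap F)
    (hG : IsFormalMap G) : IsFormalMap (Sum.elim F G)
  | .inl a => hF a
  | .inr b => hG b

lemma isFormalMap_X : IsFormalMap (X : σ → PS σ) := constantCoeff_X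

lemma isFormalMap_X_comp (e : υ → σ) : IsFormalMap fun u => (X (e u) : PS σ) :=
  fun _ => constantCoeff_X _

lemma IsFormalMap.conjPS {ι : Type*} {F : ι → PS σ} (hF : IsFormalMap F) :
    IsFormalMap fun i => conjPS (F i) := fun i => by
  simp [Segre.conjPS, hF i]

lemma conjPS_conjPS (f : PS σ) : conjPS (conjPS f) = f := by
  ext m
  simp [conjPS]

lemma conjPS_X (s : σ) : conjPS (X s : PS σ) = X s := map_X _ s

variable [Fintype τ] [DecidableEq τ]

theorem cmp_eq_subst {F : τ → PS σ} (hF : IsFormalMap F) (f : PS τ) : cmp f F = subst F f := by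
  ext m
  rw [coeff_subst (hasSubst_of_constantCoeff_zero hF)]
  have hbox : ∀ α : τ →₀ ℕ, α ∉ Finset.Iic (Finsupp.equivFunOnFinite.symm fun _ => m.degree) →
      coeff m (∏ i, F i ^ α i) = 0 := by
    intro α hα
    obtain ⟨i, hi⟩ : ∃ i, m.degree < α i := by
      simpa [Finsupp.le_def] using hα
    exact coeff_prod_pow_eq_zero_of_degree_lt hF hi
  rw [finsum_eq_sum_of_support_subset _ (s := Finset.Iic _) fun α hα => ?_]
  · simp only [cmp, ofFun, map_sum, LinearMap.map_smul,
      Finsupp.prod_fintype _ _ (fun _ => pow_zero _)]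
    rfl
  · by_contra h
    exact hα (by simp [Finsupp.prod_fintype _ _ (fun _ => pow_zero _), hbox α h])

lemma IsFormalMap.cmp {ι : Type*} {G : ι → PS τ} (hG : IsFormalMap G) {F : τ → PS σ}
    (hF : IsFormalMap F) : IsFormalMap fun i => cmp (G i) F := fun i => by
  dsimp only
  rw [cmp_eq_subst hF]
  exact constantCoeff_subst_eq_zero (hasSubst_of_constantCoeff_zero hF) hF (hG i)

lemma IsFormalMap.injPS {ι : Type*} {G : ι → PS τ} (hG : IsFormalMap G) (e : τ → σ) :
    IsFormalMap fun i => injPS e (G i) :=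
  hG.cmp (isFormalMap_X_comp e)

lemma cmp_X {F : τ → PS σ} (hF : IsFormalMap F) (s : τ) : cmp (X s) F = F s := by
  rw [cmp_eq_subst hF, subst_X (hasSubst_of_constantCoeff_zero hF)]

lemma cmp_X_self [Fintype σ] [DecidableEq σ] (f : PS σ) : cmp f X = f := by
  rw [cmp_eq_subst isFormalMap_X, subst_self, id]

lemma cmp_cmp [Fintype υ] [DecidableEq υ] {G : υ → PS τ} {F : τ → PS σ} (hG : IsFormalMap G)
    (hF : IsFormalMap F) (f : PS υ) : cmp (cmp f G) F = cmp f fun u => cmp (G u) F := by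
  rw [cmp_eq_subst hG, cmp_eq_subst hF, cmp_eq_subst (hG.cmp hF),
    subst_comp_subst_apply (hasSubst_of_constantCoeff_zero hG)
      (hasSubst_of_constantCoeff_zero hF)]
  simp only [cmp_eq_subst hF]

lemma conjPS_cmp {F : τ → PS σ} (hF : IsFormalMap F) (f : PS τ) :
    conjPS (cmp f F) = cmp (conjPS f) fun i => conjPS (F i) := by
  rw [cmp_eq_subst hF, cmp_eq_subst hF.conjPS, conjPS, conjPS,
    map_subst (hasSubst_of_constantCoeff_zero hF)]
  rfl

lemma injPS_X {e : τ → σ} (s : τ) : injPS e (X s) = X (e s) :=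
  cmp_X (isFormalMap_X_comp e) s

lemma cmp_injPS [Fintype σ] [DecidableEq σ] {e : τ → σ} {F : σ → PS υ} (hF : IsFormalMap F)
    (g : PS τ) : cmp (injPS e g) F = cmp g (F ∘ e) := by
  rw [injPS, cmp_cmp (isFormalMap_X_comp e) hF]
  simp only [cmp_X hF]
  rfl

lemma conjPS_injPS {e : τ → σ} (g : PS τ) : conjPS (injPS e g) = injPS e (conjPS g) := by
  rw [injPS, conjPS_cmp (isFormalMap_X_comp e)]
  simp only [conjPS_X]
  rfl

end Substitution

section SegreMaps

variable {n d : ℕ} {Q : Fin d → PS (Fin n ⊕ (Fin n ⊕ Fin d))}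

/-- `Q(z, χ, Q̄(χ, z, w)) = w`, the variables of `Q` being `z ⊕ (χ ⊕ τ)`. -/
def IsRealGraph (Q : Fin d → PS (Fin n ⊕ (Fin n ⊕ Fin d))) : Prop :=
  ∀ l, cmp (Q l)
      (Sum.elim
        (fun j => (X (Sum.inl j) : PS (Fin n ⊕ (Fin n ⊕ Fin d))))
        (Sum.elim (fun j => X (Sum.inr (Sum.inl j)))
          fun i => cmp (conjPS (Q i))
            (Sum.elim
              (fun j => (X (Sum.inr (Sum.inl j)) : PS (Fin n ⊕ (Fin n ⊕ Fin d))))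
              (Sum.elim (fun j => X (Sum.inl j)) fun i' => X (Sum.inr (Sum.inr i')))))) =
    X (Sum.inr (Sum.inr l))

lemma IsRealGraph.cmp_elim (hreal : IsRealGraph Q) (hQ : IsFormalMap Q) {σ : Type*} [Fintype σ]
    [DecidableEq σ] {A B : Fin n → PS σ} {W : Fin d → PS σ} (hA : IsFormalMap A)
    (hB : IsFormalMap B) (hW : IsFormalMap W) (l : Fin d) :
    cmp (Q l) (Sum.elim A (Sum.elim B fun i => cmp (conjPS (Q i)) (Sum.elim B (Sum.elim A W)))) =
      W l := by
  have hΦ : IsFormalMap (Sum.elim A (Sum.elim B W)) := hA.elim (hB.elim hW)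
  have hswap := (isFormalMap_X_comp
      fun j : Fin n => (Sum.inr (Sum.inl j) : Fin n ⊕ (Fin n ⊕ Fin d))).elim
    ((isFormalMap_X_comp Sum.inl).elim (isFormalMap_X_comp fun i => Sum.inr (Sum.inr i)))
  have hgraph := (isFormalMap_X_comp
      fun j : Fin n => (Sum.inl j : Fin n ⊕ (Fin n ⊕ Fin d))).elim
    ((isFormalMap_X_comp fun j => Sum.inr (Sum.inl j)).elim (hQ.conjPS.cmp hswap))
  have h := congrArg (fun f => cmp f (Sum.elim A (Sum.elim B W))) (hreal l)
  rw [cmp_X hΦ, cmp_cmp hgraph hΦ] at h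
  refine Eq.trans ?_ h
  congr 1
  funext t
  rcases t with i | i | i
  · exact (cmp_X hΦ (.inl i)).symm
  · exact (cmp_X hΦ (.inr (.inl i))).symm
  · change cmp (conjPS (Q i)) _ = cmp (cmp (conjPS (Q i)) _) _
    rw [cmp_cmp hswap hΦ]
    congr 1
    funext u
    rcases u with u | u | u
    · exact (cmp_X hΦ (.inr (.inl u))).symm
    · exact (cmp_X hΦ (.inl u)).symm
    · exact (cmp_X hΦ (.inr (.inr u))).symm

def blockCastSucc (k n : ℕ) : Fin (k + 1) × Fin n → Fin (k + 2) × Fin n :=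
  fun p => (p.1.castSucc, p.2)

/-- The substitution `t^{m+3} = t^{m+1}` of the last block of variables. -/
def foldLastBlock (m n : ℕ) : Fin (m + 3) × Fin n → Fin (m + 2) × Fin n :=
  fun p => ((if h : (p.1 : ℕ) < m + 2 then (⟨p.1, h⟩ : Fin (m + 2)) else ⟨m, by omega⟩), p.2)

lemma foldLastBlock_blockCastSucc (m n : ℕ) (p : Fin (m + 2) × Fin n) :
    foldLastBlock m n (blockCastSucc (m + 1) n p) = p := by
  simp [foldLastBlock, blockCastSucc]

lemma foldLastBlock_last (m : ℕ) {n : ℕ} (i : Fin n) :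
    foldLastBlock m n (Fin.last (m + 2), i) = ((Fin.last m).castSucc, i) := by
  simp [foldLastBlock, Fin.ext_iff]

lemma cmp_foldLastBlock_conjPS_injPS (m : ℕ) (g : PS (Fin (m + 2) × Fin n)) :
    cmp (conjPS (injPS (blockCastSucc (m + 1) n) g)) (fun p => X (foldLastBlock m n p)) =
      conjPS g := by
  rw [conjPS_injPS, cmp_injPS (isFormalMap_X_comp _)]
  simp only [Function.comp_def, foldLastBlock_blockCastSucc, cmp_X_self]

lemma segQ_inl (k : ℕ) (i : Fin n) :
    segQ Q k (Sum.inl i) = X (Fin.last k, i) := by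
  cases k <;> rfl

lemma segQ_succ_inr (k : ℕ) (l : Fin d) :
    segQ Q (k + 1) (Sum.inr l) = cmp (Q l)
      (Sum.elim (fun i => X (Fin.last (k + 1), i))
        fun c => conjPS (injPS (blockCastSucc k n) (segQ Q k c))) := rfl

lemma isFormalMap_segQ (hQ : IsFormalMap Q) : ∀ k, IsFormalMap (segQ Q k)
  | 0 => (isFormalMap_X_comp _).elim
      (hQ.cmp ((isFormalMap_X_comp _).elim fun _ => constantCoeff_zero))
  | k + 1 => (isFormalMap_X_comp _).elim
      (hQ.cmp ((isFormalMap_X_comp _).elim ((isFormalMap_segQ hQ k).injPS _).conjPS))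

theorem cmp_segQ_add_two_foldLastBlock (hQ : IsFormalMap Q) (hreal : IsRealGraph Q) (m : ℕ)
    (c : Fin n ⊕ Fin d) :
    cmp (segQ Q (m + 2) c) (fun p => X (foldLastBlock m n p)) =
      injPS (blockCastSucc m n) (segQ Q m c) := by
  have hR := isFormalMap_X_comp (foldLastBlock m n)
  have hW : IsFormalMap fun l => injPS (blockCastSucc m n) (segQ Q m (.inr l)) :=
    fun l => (isFormalMap_segQ hQ m).injPS _ (.inr l)
  have hγ : ∀ k, IsFormalMap (Sum.elim (fun i => X (Fin.last (k + 1), i))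
      fun c => conjPS (injPS (blockCastSucc k n) (segQ Q k c))) :=
    fun k => (isFormalMap_X_comp _).elim ((isFormalMap_segQ hQ k).injPS _).conjPS
  rcases c with i | l
  · rw [segQ_inl, cmp_X hR, segQ_inl, injPS_X, foldLastBlock_last]
    rfl
  -- the reality identity at `z = t^{m+1}`, `χ = t^{m+2}`, `(z, w) = v^{m+1}`
  rw [segQ_succ_inr, cmp_cmp (hγ _) hR,
    ← hreal.cmp_elim hQ (isFormalMap_X_comp fun i => ((Fin.last m).castSucc, i))
      (isFormalMap_X_comp fun i => (Fin.last (m + 1), i)) hW l]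
  congr 1
  funext t
  rcases t with i | c
  · rw [Sum.elim_inl, cmp_X hR, foldLastBlock_last]
    rfl
  rw [Sum.elim_inr, cmp_foldLastBlock_conjPS_injPS]
  rcases c with i | l
  · rw [segQ_inl, conjPS_X]
    rfl
  rw [segQ_succ_inr, conjPS_cmp (hγ _)]
  congr 1
  funext u
  rcases u with i | c
  · exact conjPS_X _
  rw [Sum.elim_inr, conjPS_conjPS]
  rcases c with i | l
  · rw [segQ_inl, injPS_X]
    rfl
  rfl

end SegreMaps

/-- For `j ≥ 2`, `v^{j+1}(t¹,…,t^{j-1},t^j,t^{j+1})|_{t^{j+1}=t^{j-1}}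
= v^{j-1}(t¹,…,t^{j-1})`.  Here `v^{j+1} = segQ Q j` and `v^{j-1} = segQ Q (j-2)`. -/
theorem statement_13 {n d : ℕ} (Q : Fin d → PS (Fin n ⊕ (Fin n ⊕ Fin d)))
    (hQ0 : IsFormalMap Q)
    (hreal : ∀ l, cmp (Q l)
        (Sum.elim
          (fun j => (MvPowerSeries.X (Sum.inl j) : PS (Fin n ⊕ (Fin n ⊕ Fin d))))
          (Sum.elim (fun j => MvPowerSeries.X (Sum.inr (Sum.inl j)))
            fun i => cmp (conjPS (Q i))
              (Sum.elim
                (fun j => (MvPowerSeries.X (Sum.inr (Sum.inl j)) :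
                    PS (Fin n ⊕ (Fin n ⊕ Fin d))))
                (Sum.elim (fun j => MvPowerSeries.X (Sum.inl j))
                  fun i' => MvPowerSeries.X (Sum.inr (Sum.inr i')))))) =
      MvPowerSeries.X (Sum.inr (Sum.inr l)))
    (j : ℕ) (hj : 2 ≤ j) :
    ∀ c : Fin n ⊕ Fin d,
      cmp (segQ Q j c)
        (fun p : Fin (j + 1) × Fin n =>
          MvPowerSeries.X
            ((if h : (p.1 : ℕ) < j then (⟨p.1, h⟩ : Fin j) else ⟨j - 2, by omega⟩), p.2)) =
      injPS
        (fun p : Fin (j - 2 + 1) × Fin n =>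
          ((⟨p.1, by have := p.1.isLt; omega⟩ : Fin j), p.2))
        (segQ Q (j - 2) c) := by
  obtain ⟨m, rfl⟩ : ∃ m, j = m + 2 := ⟨j - 2, by omega⟩
  exact cmp_segQ_add_two_foldLastBlock hQ0 hreal m

end Segre
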